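/- The random injection σ driving the infinite q-shuffle is almost surely a bijection of ℕ: with probability 1, every positive integer m equals σ(j) for some j ∈ ℕ. -/

import Mathlib

open MeasureTheory ProbabilityTheory

/-- The first `j` values `σ(0), …, σ(j-1)` of the infinite `q`-shuffle permutation driven by
the (0-indexed) geometric choices `x`: at step `j`, the `x j`-th smallest natural number not
chosen so far is appended. -/
noncomputable def shufflePrefix (x : ℕ → ℕ) : ℕ → List ℕ
  | 0 => []
  | j + 1 => shufflePrefix x j ++ [Nat.nth (fun m => m ∉ shufflePrefix x j) (x j)]

/-- The random injection `σ : ℕ → ℕ` driving the infinite `q`-shuffle: `σ(j)` is the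
`x j`-th smallest (0-indexed) natural number not in `{σ(0), …, σ(j-1)}`. -/
noncomputable def shuffleSeq (x : ℕ → ℕ) (j : ℕ) : ℕ :=
  Nat.nth (fun m => m ∉ shufflePrefix x j) (x j)

/-! If `m` has not been chosen in the first `n` steps, it is the `k`-th smallest unchosen number
for some `k ≤ m`; since `ξ n` is independent of the first `n` choices, step `n` picks `m` with
probability `P(ξ n = k) ≥ (1 - q) q ^ m`. So `m` is still missing after `n` steps with probability
at most `(1 - (1 - q) q ^ m) ^ n → 0`, and a countable union of null events is null. -/

open scoped ENNReal

theorem ProbabilityTheory.IndepFun.measure_preimage_prodMk_le {Ω α β : Type*}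
    [MeasurableSpace Ω] [MeasurableSpace α] [MeasurableSpace β] {P : Measure Ω}
    [IsFiniteMeasure P] {X : Ω → α} {Y : Ω → β} (hXY : IndepFun X Y P)
    (hX : Measurable X) (hY : Measurable Y) {A : Set α} (hA : MeasurableSet A)
    {S : Set (α × β)} (hS : MeasurableSet S) (hSA : S ⊆ A ×ˢ Set.univ) {r : ℝ≥0∞}
    (hr : ∀ a ∈ A, P (Y ⁻¹' (Prod.mk a ⁻¹' S)) ≤ r) :
    P ((fun ω => (X ω, Y ω)) ⁻¹' S) ≤ r * P (X ⁻¹' A) := by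
  have hsection : ∀ a, P.map Y (Prod.mk a ⁻¹' S) ≤ A.indicator (fun _ => r) a := by
    intro a
    by_cases ha : a ∈ A
    · rw [Set.indicator_of_mem ha, Measure.map_apply hY (measurable_prodMk_left hS)]
      exact hr a ha
    · have : Prod.mk a ⁻¹' S = ∅ :=
        Set.eq_empty_of_forall_notMem fun b hb => ha (hSA hb).1
      simp [this]
  calc P ((fun ω => (X ω, Y ω)) ⁻¹' S)
      = ((P.map X).prod (P.map Y)) S := by
        rw [← (indepFun_iff_map_prod_eq_prod_map_map hX.aemeasurable hY.aemeasurable).1 hXY,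
          Measure.map_apply (hX.prodMk hY) hS]
    _ = ∫⁻ a, P.map Y (Prod.mk a ⁻¹' S) ∂(P.map X) := Measure.prod_apply hS
    _ ≤ ∫⁻ a, A.indicator (fun _ => r) a ∂(P.map X) := lintegral_mono hsection
    _ = r * P (X ⁻¹' A) := by rw [lintegral_indicator_const hA, Measure.map_apply hX hA]

theorem shufflePrefix_congr {x y : ℕ → ℕ} : ∀ n : ℕ, (∀ j < n, x j = y j) →
    shufflePrefix x n = shufflePrefix y n
  | 0, _ => rfl
  | n + 1, h => by
    simp only [shufflePrefix, shufflePrefix_congr n fun j hj => h j (Nat.lt_succ_of_lt hj),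
      h n (Nat.lt_succ_self n)]

theorem shufflePrefix_extend_restrict (x : ℕ → ℕ) (n : ℕ) :
    shufflePrefix (Function.extend Subtype.val (fun i : Finset.range n => x i) 0) n =
      shufflePrefix x n :=
  shufflePrefix_congr n fun j hj =>
    Subtype.val_injective.extend_apply _ _ ⟨j, Finset.mem_range.2 hj⟩

theorem notMem_shufflePrefix_succ_iff (x : ℕ → ℕ) (n m : ℕ) :
    m ∉ shufflePrefix x (n + 1) ↔
      m ∉ shufflePrefix x n ∧ x n ≠ Nat.count (· ∉ shufflePrefix x n) m := by
  have hinf : {k | k ∉ shufflePrefix x n}.Infinite := by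
    simpa [Set.compl_ofPred] using (List.finite_toSet (shufflePrefix x n)).infinite_compl
  simp only [shufflePrefix, List.mem_append, List.mem_singleton, not_or]
  refine and_congr_right fun hm => not_congr ⟨fun h => ?_, fun h => ?_⟩
  · rw [h, Nat.count_nth_of_infinite hinf]
  · rw [h, Nat.nth_count hm]

theorem exists_shuffleSeq_eq_of_mem_shufflePrefix {x : ℕ → ℕ} {m : ℕ} :
    ∀ {n : ℕ}, m ∈ shufflePrefix x n → ∃ j, shuffleSeq x j = m
  | 0, h => absurd h List.not_mem_nil
  | n + 1, h => by
    simp only [shufflePrefix, List.mem_append, List.mem_singleton] at h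
    exact h.elim exists_shuffleSeq_eq_of_mem_shufflePrefix fun h => ⟨n, h.symm⟩

section

variable {Ω : Type*} [MeasurableSpace Ω] {P : Measure Ω} [IsProbabilityMeasure P]
  {ξ : ℕ → Ω → ℕ}

theorem measure_notMem_shufflePrefix_succ_le (hmeas : ∀ j, Measurable (ξ j))
    (hindep : iIndepFun ξ P) {m : ℕ} {c : ℝ≥0∞} (n : ℕ)
    (hc : ∀ k ≤ m, c ≤ P {ω | ξ n ω = k}) :
    P {ω | m ∉ shufflePrefix (fun t => ξ t ω) (n + 1)} ≤
      (1 - c) * P {ω | m ∉ shufflePrefix (fun t => ξ t ω) n} := by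
  set X : Ω → (Finset.range n → ℕ) := fun ω i => ξ i ω
  set pre : (Finset.range n → ℕ) → List ℕ := fun v =>
    shufflePrefix (Function.extend Subtype.val v 0) n
  have hpre : ∀ ω, pre (X ω) = shufflePrefix (fun t => ξ t ω) n := fun ω =>
    shufflePrefix_extend_restrict (fun t => ξ t ω) n
  have hXY : IndepFun X (ξ n) P :=
    (hindep.indepFun_finset (Finset.range n) {n} (by simp) hmeas).comp measurable_id
      (measurable_pi_apply (⟨n, Finset.mem_singleton_self n⟩ : ({n} : Finset ℕ)))
  set A : Set (Finset.range n → ℕ) := {v | m ∉ pre v}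
  set S : Set ((Finset.range n → ℕ) × ℕ) :=
    {p | m ∉ pre p.1 ∧ p.2 ≠ Nat.count (· ∉ pre p.1) m}
  have hS : {ω | m ∉ shufflePrefix (fun t => ξ t ω) (n + 1)} = (fun ω => (X ω, ξ n ω)) ⁻¹' S := by
    ext ω
    simp only [Set.mem_ofPred_eq, Set.mem_preimage, S, hpre]
    exact notMem_shufflePrefix_succ_iff _ n m
  have hA : {ω | m ∉ shufflePrefix (fun t => ξ t ω) n} = X ⁻¹' A := by
    ext ω
    simp only [Set.mem_ofPred_eq, Set.mem_preimage, A, hpre]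
  rw [hS, hA]
  refine hXY.measure_preimage_prodMk_le (measurable_pi_lambda _ fun i => hmeas i) (hmeas n)
    .of_discrete .of_discrete (fun p hp => ⟨hp.1, trivial⟩) fun v hv => ?_
  have hsection : ξ n ⁻¹' (Prod.mk v ⁻¹' S) = (ξ n ⁻¹' {Nat.count (· ∉ pre v) m})ᶜ := by
    ext ω
    simp only [Set.mem_preimage, Set.mem_ofPred_eq, Set.mem_compl_iff, Set.mem_singleton_iff, S]
    exact and_iff_right hv
  rw [hsection, prob_compl_eq_one_sub (hmeas n (measurableSet_singleton _))]
  exact tsub_le_tsub_left (hc _ (Nat.count_le _)) 1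

theorem measure_notMem_shufflePrefix_le (hmeas : ∀ j, Measurable (ξ j))
    (hindep : iIndepFun ξ P) {m : ℕ} {c : ℝ≥0∞} (hc : ∀ j, ∀ k ≤ m, c ≤ P {ω | ξ j ω = k}) :
    ∀ n, P {ω | m ∉ shufflePrefix (fun t => ξ t ω) n} ≤ (1 - c) ^ n
  | 0 => by simp [shufflePrefix]
  | n + 1 => calc
      _ ≤ (1 - c) * P {ω | m ∉ shufflePrefix (fun t => ξ t ω) n} :=
        measure_notMem_shufflePrefix_succ_le hmeas hindep n (hc n)
      _ ≤ (1 - c) ^ (n + 1) := by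
        rw [pow_succ']
        gcongr
        exact measure_notMem_shufflePrefix_le hmeas hindep hc n

theorem ae_exists_shuffleSeq_eq (hmeas : ∀ j, Measurable (ξ j)) (hindep : iIndepFun ξ P)
    {m : ℕ} {c : ℝ≥0∞} (hc0 : c ≠ 0) (hc : ∀ j, ∀ k ≤ m, c ≤ P {ω | ξ j ω = k}) :
    ∀ᵐ ω ∂P, ∃ j, shuffleSeq (fun t => ξ t ω) j = m := by
  have hmissed : ∀ n, {ω | ¬∃ j, shuffleSeq (fun t => ξ t ω) j = m} ⊆
      {ω | m ∉ shufflePrefix (fun t => ξ t ω) n} := fun n ω hω hmem =>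
    hω (exists_shuffleSeq_eq_of_mem_shufflePrefix hmem)
  rw [ae_iff]
  refine le_antisymm (ge_of_tendsto' (ENNReal.tendsto_pow_atTop_nhds_zero_of_lt_one
    (ENNReal.sub_lt_self ENNReal.one_ne_top one_ne_zero hc0)) fun n => ?_) bot_le
  exact (measure_mono (hmissed n)).trans (measure_notMem_shufflePrefix_le hmeas hindep hc n)

end

/-- the random injection driving the infinite `q`-shuffle is almost surely a
bijection of `ℕ`: with probability 1 every natural number is in its range.  Here
`ξ_0, ξ_1, …` are independent with the (0-indexed) geometric law `P(ξ = i) = (1-q) q^i`. -/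
theorem stmt_8 (q : ℝ) (hq0 : 0 < q) (hq1 : q < 1)
    (Ω : Type*) [MeasurableSpace Ω] (P : Measure Ω) [IsProbabilityMeasure P]
    (ξ : ℕ → Ω → ℕ) (hmeas : ∀ j, Measurable (ξ j))
    (hindep : iIndepFun ξ P)
    (hgeom : ∀ j i : ℕ, P {ω | ξ j ω = i} = ENNReal.ofReal ((1 - q) * q ^ i)) :
    P {ω | ∀ m : ℕ, ∃ j : ℕ, shuffleSeq (fun t => ξ t ω) j = m} = 1 := by
  have hsurj : ∀ᵐ ω ∂P, ∀ m, ∃ j, shuffleSeq (fun t => ξ t ω) j = m := by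
    refine ae_all_iff.2 fun m => ae_exists_shuffleSeq_eq hmeas hindep
      (c := ENNReal.ofReal ((1 - q) * q ^ m)) ?_ fun j k hk => ?_
    · exact (ENNReal.ofReal_pos.2 (mul_pos (by linarith) (pow_pos hq0 m))).ne'
    · rw [hgeom]
      exact ENNReal.ofReal_le_ofReal (mul_le_mul_of_nonneg_left
        (pow_le_pow_of_le_one hq0.le hq1.le hk) (by linarith))
  exact (measure_congr (ae_eq_univ.2 hsurj)).trans measure_univ
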